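/- arXiv:2005.13380 — 5 statements merged into one kernel-verified Lean document; each statement's English description precedes it below -/
import Mathlib

section
/- The function (ρ, S) ↦ ρ^γ * exp(S/(c_v ρ)) is strictly convex on the set {(ρ, S) : ρ > 0}, where γ > 1 and c_v = 1/(γ-1). -/
open Real Set

/-- Jensen for the perspective of `exp`. -/
lemma exp_persp_le {ρ₁ ρ₂ a b t₁ t₂ : ℝ} (h1 : 0 < ρ₁) (h2 : 0 < ρ₂)
    (ha : 0 < a) (hb : 0 < b) :
    (a*ρ₁+b*ρ₂) * Real.exp ((a*ρ₁*t₁ + b*ρ₂*t₂)/(a*ρ₁+b*ρ₂))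
      ≤ a*ρ₁*Real.exp t₁ + b*ρ₂*Real.exp t₂ := by
  have hρ : 0 < a*ρ₁+b*ρ₂ := by positivity
  have key := convexOn_exp.2 (mem_univ t₁) (mem_univ t₂)
    (le_of_lt (by positivity : (0:ℝ) < a*ρ₁/(a*ρ₁+b*ρ₂)))
    (le_of_lt (by positivity : (0:ℝ) < b*ρ₂/(a*ρ₁+b*ρ₂)))
    (by field_simp)
  simp only [smul_eq_mul] at key
  have := mul_le_mul_of_nonneg_left key hρ.le
  calc (a*ρ₁+b*ρ₂) * Real.exp ((a*ρ₁*t₁ + b*ρ₂*t₂)/(a*ρ₁+b*ρ₂))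
      = (a*ρ₁+b*ρ₂) * Real.exp (a*ρ₁/(a*ρ₁+b*ρ₂) * t₁ + b*ρ₂/(a*ρ₁+b*ρ₂) * t₂) := by
        congr 1; field_simp; try ring
    _ ≤ (a*ρ₁+b*ρ₂) * (a*ρ₁/(a*ρ₁+b*ρ₂) * Real.exp t₁ + b*ρ₂/(a*ρ₁+b*ρ₂) * Real.exp t₂) := this
    _ = a*ρ₁*Real.exp t₁ + b*ρ₂*Real.exp t₂ := by field_simp; try ring

/-- Strict Jensen for the perspective of `exp`. -/
lemma exp_persp_lt {ρ₁ ρ₂ a b t₁ t₂ : ℝ} (h1 : 0 < ρ₁) (h2 : 0 < ρ₂)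
    (ha : 0 < a) (hb : 0 < b) (ht : t₁ ≠ t₂) :
    (a*ρ₁+b*ρ₂) * Real.exp ((a*ρ₁*t₁ + b*ρ₂*t₂)/(a*ρ₁+b*ρ₂))
      < a*ρ₁*Real.exp t₁ + b*ρ₂*Real.exp t₂ := by
  have hρ : 0 < a*ρ₁+b*ρ₂ := by positivity
  have key := strictConvexOn_exp.2 (mem_univ t₁) (mem_univ t₂) ht
    (by positivity : (0:ℝ) < a*ρ₁/(a*ρ₁+b*ρ₂))
    (by positivity : (0:ℝ) < b*ρ₂/(a*ρ₁+b*ρ₂))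
    (by field_simp)
  simp only [smul_eq_mul] at key
  have := mul_lt_mul_of_pos_left key hρ
  calc (a*ρ₁+b*ρ₂) * Real.exp ((a*ρ₁*t₁ + b*ρ₂*t₂)/(a*ρ₁+b*ρ₂))
      = (a*ρ₁+b*ρ₂) * Real.exp (a*ρ₁/(a*ρ₁+b*ρ₂) * t₁ + b*ρ₂/(a*ρ₁+b*ρ₂) * t₂) := by
        congr 1; field_simp; try ring
    _ < (a*ρ₁+b*ρ₂) * (a*ρ₁/(a*ρ₁+b*ρ₂) * Real.exp t₁ + b*ρ₂/(a*ρ₁+b*ρ₂) * Real.exp t₂) := this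
    _ = a*ρ₁*Real.exp t₁ + b*ρ₂*Real.exp t₂ := by field_simp; try ring

/-- The pressure function `(ρ, S) ↦ ρ^γ * exp (S / (c_v * ρ))`, `c_v = 1/(γ-1)`,
is strictly convex on the half plane `{(ρ, S) | 0 < ρ}`. -/
theorem pressure_strictConvexOn (γ : ℝ) (hγ : 1 < γ) (cv : ℝ) (hcv : cv = 1 / (γ - 1)) :
    StrictConvexOn ℝ {q : ℝ × ℝ | 0 < q.1}
      (fun q => q.1 ^ γ * Real.exp (q.2 / (cv * q.1))) := by
  have hγ0 : (0:ℝ) < γ := by linarith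
  have hγ1 : (0:ℝ) < γ - 1 := by linarith
  set b' : ℝ := (γ - 1) / γ with hb'
  set h : ℝ × ℝ → ℝ := fun q => q.1 * Real.exp (b' * (q.2 / q.1)) with hh
  have hpos : ∀ q : ℝ × ℝ, 0 < q.1 → 0 < h q := fun q hq => mul_pos hq (Real.exp_pos _)
  have hf : ∀ q : ℝ × ℝ, 0 < q.1 → q.1 ^ γ * Real.exp (q.2 / (cv * q.1)) = (h q) ^ γ := by
    intro q hq
    rw [hh]
    simp only
    rw [Real.mul_rpow hq.le (Real.exp_pos _).le, ← Real.exp_mul]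
    congr 2
    rw [hcv, hb']
    field_simp
  constructor
  · exact convex_halfSpace_gt ⟨fun x y => rfl, fun c x => rfl⟩ 0
  · rintro x hx y hy hxy a b ha hb hab
    simp only [mem_setOf_eq] at hx hy
    simp only [smul_eq_mul]
    have hz1 : 0 < (a • x + b • y).1 := by
      simp only [Prod.fst_add, Prod.smul_fst, smul_eq_mul]
      positivity
    rw [hf _ hz1, hf _ hx, hf _ hy]
    -- key bound : h (a•x+b•y) ≤ a * h x + b * h y, strict when slopes differ
    have hzfst : (a • x + b • y).1 = a * x.1 + b * y.1 := rfl
    have hzsnd : (a • x + b • y).2 = a * x.2 + b * y.2 := rfl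
    have harg : b' * ((a • x + b • y).2 / (a • x + b • y).1)
        = (a * x.1 * (b' * (x.2 / x.1)) + b * y.1 * (b' * (y.2 / y.1)))
          / (a * x.1 + b * y.1) := by
      rw [hzfst, hzsnd]
      have hd : a * x.1 + b * y.1 ≠ 0 := by positivity
      field_simp
    have hhz : h (a • x + b • y)
        = (a * x.1 + b * y.1) * Real.exp
            ((a * x.1 * (b' * (x.2 / x.1)) + b * y.1 * (b' * (y.2 / y.1)))
              / (a * x.1 + b * y.1)) := by
      rw [hh]; simp only; rw [harg, hzfst]
    have hxy' : a * x.1 * Real.exp (b' * (x.2 / x.1)) + b * y.1 * Real.exp (b' * (y.2 / y.1))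
        = a * h x + b * h y := by rw [hh]; ring
    by_cases hu : b' * (x.2 / x.1) = b' * (y.2 / y.1)
    · -- slopes equal: x, y proportional, so h x ≠ h y; use strict convexity of rpow
      have hle : h (a • x + b • y) ≤ a * h x + b * h y := by
        rw [hhz, ← hxy']
        exact exp_persp_le hx hy ha hb
      have hne : h x ≠ h y := by
        intro he
        apply hxy
        have hb'0 : b' ≠ 0 := by rw [hb']; positivity
        have hρ : x.1 = y.1 := by
          rw [hh] at he; simp only [hu] at he
          exact mul_right_cancel₀ (Real.exp_pos _).ne' he
        have hS : x.2 = y.2 := by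
          have : x.2 / x.1 = y.2 / y.1 := mul_left_cancel₀ hb'0 hu
          rw [hρ] at this
          field_simp [hy.ne'] at this
          exact this
        exact Prod.ext hρ hS
      calc (h (a • x + b • y)) ^ γ ≤ (a * h x + b * h y) ^ γ :=
            Real.rpow_le_rpow (hpos _ hz1).le hle hγ0.le
        _ = (a • h x + b • h y) ^ γ := by norm_num
        _ < a • (h x) ^ γ + b • (h y) ^ γ :=
            (strictConvexOn_rpow hγ).2 (le_of_lt (hpos _ hx)) (le_of_lt (hpos _ hy))
              hne ha hb hab
        _ = a * (h x) ^ γ + b * (h y) ^ γ := by norm_num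
    · -- slopes differ: strict perspective inequality
      have hlt : h (a • x + b • y) < a * h x + b * h y := by
        rw [hhz, ← hxy']
        exact exp_persp_lt hx hy ha hb hu
      calc (h (a • x + b • y)) ^ γ < (a * h x + b * h y) ^ γ :=
            Real.rpow_lt_rpow (hpos _ hz1).le hlt hγ0
        _ = (a • h x + b • h y) ^ γ := by norm_num
        _ ≤ a • (h x) ^ γ + b • (h y) ^ γ :=
            (convexOn_rpow hγ.le).2 (le_of_lt (hpos _ hx)) (le_of_lt (hpos _ hy))
              ha.le hb.le hab
        _ = a * (h x) ^ γ + b * (h y) ^ γ := by norm_num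
end

section
/- The extended energy function e : ℝ^(d+2) → [0, ∞], defined by e(ρ, m, S) = |m|²/(2ρ) + c_v ρ^γ exp(S/(c_v ρ)) if ρ > 0, e(ρ, m, S) = 0 if ρ = 0, m = 0 and S ≤ 0, and e(ρ, m, S) = ∞ otherwise, is convex and lower semi-continuous on ℝ × ℝ^d × ℝ. -/
open scoped ENNReal

open Classical in
/-- The extended total energy `e(ρ, m, S)` with values in `[0, ∞]`. -/
noncomputable def energyExt (d : ℕ) (γ cv : ℝ) :
    ℝ × EuclideanSpace ℝ (Fin d) × ℝ → ℝ≥0∞ := fun x =>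
  if 0 < x.1 then
    ENNReal.ofReal (‖x.2.1‖ ^ 2 / (2 * x.1) + cv * x.1 ^ γ * Real.exp (x.2.2 / (cv * x.1)))
  else if x.1 = 0 ∧ x.2.1 = 0 ∧ x.2.2 ≤ 0 then 0 else ⊤

/-!
On the half-space `ρ > 0` the energy is `|m|²/(2ρ) + c_v (ρ exp(S/(γ c_v ρ)))^γ`: the perspective
`(ρ, m) ↦ ρ f(m/ρ)` of the convex function `f = |·|²/2`, plus a convex nondecreasing power of the
perspective of an exponential, hence convex. Mixing a vacuum state `(0, 0, S)`, `S ≤ 0`, into a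
state of positive density only lowers the entropy and scales the state by `t ≤ 1`, while the energy
is increasing in `S` and satisfies `e(t x) ≤ t e(x)` because `t^γ ≤ t`. Away from the vacuum states
the extended energy is continuous, since as `ρ → 0⁺` with `m ≠ 0` or `S > 0` either `|m|²/(2ρ)` or
`ρ^γ exp(S/(c_v ρ))` blows up; at vacuum states it vanishes, so it is lower semicontinuous.
-/

open Real Set Filter Topology
section Perspective

variable {E : Type*} [AddCommGroup E] [Module ℝ E]

lemma inv_smul_add_eq_add_smul_inv_smul {t₁ t₂ a b : ℝ} (ht₁ : t₁ ≠ 0) (ht₂ : t₂ ≠ 0)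
    (x₁ x₂ : E) :
    (a * t₁ + b * t₂)⁻¹ • (a • x₁ + b • x₂) =
      (a * t₁ / (a * t₁ + b * t₂)) • (t₁⁻¹ • x₁) + (b * t₂ / (a * t₁ + b * t₂)) • (t₂⁻¹ • x₂) := by
  simp only [smul_add, smul_smul]
  congr 2 <;> field_simp

theorem ConvexOn.perspective {s : Set E} {f : E → ℝ} (hf : ConvexOn ℝ s f) :
    ConvexOn ℝ {p : ℝ × E | 0 < p.1 ∧ p.1⁻¹ • p.2 ∈ s} (fun p => p.1 * f (p.1⁻¹ • p.2)) := by
  refine ⟨?_, ?_⟩ <;>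
    rintro ⟨t₁, x₁⟩ ⟨ht₁, hx₁⟩ ⟨t₂, x₂⟩ ⟨ht₂, hx₂⟩ a b ha hb hab <;>
    simp only [Prod.smul_mk, Prod.mk_add_mk, smul_eq_mul, mem_ofPred_eq] at * <;>
    have ht : 0 < a * t₁ + b * t₂ := convex_Ioi (0 : ℝ) ht₁ ht₂ ha hb hab <;>
    have hw : a * t₁ / (a * t₁ + b * t₂) + b * t₂ / (a * t₁ + b * t₂) = 1 :=
      (by field_simp) <;>
    rw [inv_smul_add_eq_add_smul_inv_smul ht₁.ne' ht₂.ne']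
  · exact ⟨ht, hf.1 hx₁ hx₂ (by positivity) (by positivity) hw⟩
  · calc (a * t₁ + b * t₂) * f _
        ≤ (a * t₁ + b * t₂) * ((a * t₁ / (a * t₁ + b * t₂)) • f (t₁⁻¹ • x₁) +
            (b * t₂ / (a * t₁ + b * t₂)) • f (t₂⁻¹ • x₂)) :=
          mul_le_mul_of_nonneg_left (hf.2 hx₁ hx₂ (by positivity) (by positivity) hw) ht.le
      _ = a * (t₁ * f (t₁⁻¹ • x₁)) + b * (t₂ * f (t₂⁻¹ • x₂)) := by
          simp only [smul_eq_mul]; field_simp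

end Perspective

theorem ConvexOn.rpow {E : Type*} [AddCommGroup E] [Module ℝ E] {s : Set E} {f : E → ℝ}
    (hf : ConvexOn ℝ s f) (hf₀ : ∀ x ∈ s, 0 ≤ f x) {p : ℝ} (hp : 1 ≤ p) :
    ConvexOn ℝ s (fun x => f x ^ p) := by
  refine ⟨hf.1, fun x hx y hy a b ha hb hab => ?_⟩
  calc f (a • x + b • y) ^ p ≤ (a • f x + b • f y) ^ p :=
        rpow_le_rpow (hf₀ _ (hf.1 hx hy ha hb hab)) (hf.2 hx hy ha hb hab) (by linarith)
    _ ≤ a • f x ^ p + b • f y ^ p :=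
        (convexOn_rpow hp).2 (hf₀ x hx) (hf₀ y hy) ha hb hab

theorem convexOn_kineticEnergy {E : Type*} [NormedAddCommGroup E] [NormedSpace ℝ E] :
    ConvexOn ℝ {p : ℝ × E | 0 < p.1} (fun p => ‖p.2‖ ^ 2 / (2 * p.1)) := by
  have hsq : ConvexOn ℝ univ (fun m : E => ‖m‖ ^ 2 / 2) := by
    simpa [div_eq_inv_mul] using
      ((convexOn_norm convex_univ).pow (fun _ _ => norm_nonneg _) 2).smul
        (c := (2 : ℝ)⁻¹) (by norm_num)
  have hpersp : ConvexOn ℝ {p : ℝ × E | 0 < p.1} (fun p => p.1 * (‖p.1⁻¹ • p.2‖ ^ 2 / 2)) := by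
    simpa using hsq.perspective
  refine hpersp.congr fun p (hp : 0 < p.1) => ?_
  simp only [norm_smul, norm_inv, Real.norm_of_nonneg hp.le]
  field_simp

theorem convexOn_internalEnergy {γ cv : ℝ} (hγ : 1 ≤ γ) (hcv : 0 < cv) :
    ConvexOn ℝ {p : ℝ × ℝ | 0 < p.1} (fun p => cv * p.1 ^ γ * exp (p.2 / (cv * p.1))) := by
  have hexp : ConvexOn ℝ univ (fun S : ℝ => exp ((γ * cv)⁻¹ * S)) :=
    convexOn_exp.comp_linearMap (LinearMap.mul ℝ ℝ (γ * cv)⁻¹)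
  have hpersp : ConvexOn ℝ {p : ℝ × ℝ | 0 < p.1}
      (fun p => p.1 * exp ((γ * cv)⁻¹ * (p.1⁻¹ * p.2))) := by
    simpa using hexp.perspective
  have hpow := hpersp.rpow (fun p (hp : 0 < p.1) => by positivity) hγ
  refine (hpow.smul hcv.le).congr fun p (hp : 0 < p.1) => ?_
  simp only [smul_eq_mul]
  rw [mul_rpow hp.le (exp_pos _).le, ← exp_mul]
  field_simp

noncomputable def totalEnergy {E : Type*} [NormedAddCommGroup E] (γ cv : ℝ) (x : ℝ × E × ℝ) :
    ℝ :=
  ‖x.2.1‖ ^ 2 / (2 * x.1) + cv * x.1 ^ γ * exp (x.2.2 / (cv * x.1))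

section TotalEnergy

variable {E : Type*} [NormedAddCommGroup E] {γ cv : ℝ}

theorem convexOn_totalEnergy [NormedSpace ℝ E] (hγ : 1 ≤ γ) (hcv : 0 < cv) :
    ConvexOn ℝ {x : ℝ × E × ℝ | 0 < x.1} (totalEnergy γ cv) := by
  have hkin := convexOn_kineticEnergy.comp_linearMap (LinearMap.id.prodMap (LinearMap.fst ℝ E ℝ))
  have hint := (convexOn_internalEnergy hγ hcv).comp_linearMap
    (LinearMap.id.prodMap (LinearMap.snd ℝ E ℝ))
  exact hkin.add hint

theorem totalEnergy_nonneg (hcv : 0 < cv) {x : ℝ × E × ℝ} (hx : 0 < x.1) :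
    0 ≤ totalEnergy γ cv x := by
  unfold totalEnergy; positivity

theorem totalEnergy_le_of_entropy_le (hcv : 0 < cv) {ρ S S' : ℝ} (hρ : 0 < ρ) (m : E)
    (hS : S ≤ S') : totalEnergy γ cv (ρ, m, S) ≤ totalEnergy γ cv (ρ, m, S') := by
  unfold totalEnergy
  gcongr

theorem totalEnergy_smul_le (hγ : 1 ≤ γ) (hcv : 0 < cv) [NormedSpace ℝ E] {t ρ : ℝ}
    (ht₀ : 0 < t) (ht₁ : t ≤ 1) (hρ : 0 < ρ) (m : E) (S : ℝ) :
    totalEnergy γ cv (t * ρ, t • m, t * S) ≤ t * totalEnergy γ cv (ρ, m, S) := by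
  have hpow : t ^ γ ≤ t := by simpa using rpow_le_rpow_of_exponent_ge ht₀ ht₁ hγ
  simp only [totalEnergy, norm_smul, Real.norm_of_nonneg ht₀.le, mul_rpow ht₀.le hρ.le]
  have hkin : (t * ‖m‖) ^ 2 / (2 * (t * ρ)) = t * (‖m‖ ^ 2 / (2 * ρ)) := by field_simp
  have hent : t * S / (cv * (t * ρ)) = S / (cv * ρ) := by field_simp
  rw [hkin, hent, mul_add, add_le_add_iff_left]
  calc cv * (t ^ γ * ρ ^ γ) * exp (S / (cv * ρ))
        = t ^ γ * (cv * ρ ^ γ * exp (S / (cv * ρ))) := by ring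
    _ ≤ t * (cv * ρ ^ γ * exp (S / (cv * ρ))) := by gcongr

theorem continuousAt_totalEnergy (hcv : cv ≠ 0) {x : ℝ × E × ℝ} (hx : x.1 ≠ 0) :
    ContinuousAt (totalEnergy γ cv) x := by
  unfold totalEnergy
  fun_prop (disch := simp [hx, hcv])

end TotalEnergy

theorem tendsto_rpow_mul_exp_div_nhdsGT_zero (γ : ℝ) {k : ℝ} (hk : 0 < k) :
    Tendsto (fun ρ : ℝ => ρ ^ γ * exp (k / ρ)) (𝓝[>] 0) atTop := by
  refine ((tendsto_exp_mul_div_rpow_atTop γ k hk).comp tendsto_inv_nhdsGT_zero).congr' ?_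
  filter_upwards [self_mem_nhdsWithin] with ρ (hρ : 0 < ρ)
  simp only [Function.comp_apply, inv_rpow hρ.le, div_inv_eq_mul, div_eq_mul_inv k]
  ring

theorem tendsto_totalEnergy_atTop {E : Type*} [NormedAddCommGroup E] {γ cv : ℝ} (hcv : 0 < cv)
    {m : E} {S : ℝ} (h : m ≠ 0 ∨ 0 < S) :
    Tendsto (totalEnergy γ cv) (𝓝[{x | 0 < x.1}] (0, m, S)) atTop := by
  have hρ : Tendsto (fun x : ℝ × E × ℝ => x.1) (𝓝[{x | 0 < x.1}] (0, m, S)) (𝓝[>] 0) :=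
    continuous_fst.continuousWithinAt.tendsto_nhdsWithin fun x hx => hx
  have hpos : ∀ᶠ x : ℝ × E × ℝ in 𝓝[{x | 0 < x.1}] (0, m, S), 0 < x.1 := self_mem_nhdsWithin
  have hnhds : 𝓝[{x | 0 < x.1}] ((0 : ℝ), m, S) ≤ 𝓝 (0, m, S) := nhdsWithin_le_nhds
  rcases h with hm | hS
  · have hkin : Tendsto (fun x : ℝ × E × ℝ => ‖x.2.1‖ ^ 2 / 2 * x.1⁻¹)
        (𝓝[{x | 0 < x.1}] (0, m, S)) atTop :=
      Tendsto.pos_mul_atTop (by positivity)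
        ((Continuous.tendsto (by fun_prop) _).mono_left hnhds)
        (tendsto_inv_nhdsGT_zero.comp hρ)
    refine tendsto_atTop_add_right_of_le' _ 0 (hkin.congr fun x => by ring) ?_
    filter_upwards [hpos] with x hx
    positivity
  · have hint := ((tendsto_rpow_mul_exp_div_nhdsGT_zero γ
      (by positivity : 0 < S / 2 / cv)).comp hρ).const_mul_atTop hcv
    refine tendsto_atTop_add_left_of_le' _ 0 ?_ (tendsto_atTop_mono' _ ?_ hint)
    · filter_upwards [hpos] with x hx
      positivity
    · have hS' : ∀ᶠ x : ℝ × E × ℝ in 𝓝[{x | 0 < x.1}] (0, m, S), S / 2 < x.2.2 :=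
        hnhds ((continuous_snd.snd.tendsto _).eventually (lt_mem_nhds (half_lt_self hS)))
      filter_upwards [hpos, hS'] with x hx hxS
      rw [Function.comp_apply, div_div (S / 2), ← mul_assoc]
      gcongr

section EnergyExt

variable {d : ℕ} {γ cv : ℝ}

theorem energyExt_of_pos {x : ℝ × EuclideanSpace ℝ (Fin d) × ℝ} (hx : 0 < x.1) :
    energyExt d γ cv x = ENNReal.ofReal (totalEnergy γ cv x) :=
  if_pos hx

theorem energyExt_vacuum {S : ℝ} (hS : S ≤ 0) : energyExt d γ cv (0, 0, S) = 0 := by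
  simp [energyExt, hS]

theorem energyExt_eq_top {x : ℝ × EuclideanSpace ℝ (Fin d) × ℝ} (h₁ : ¬0 < x.1)
    (h₂ : ¬(x.1 = 0 ∧ x.2.1 = 0 ∧ x.2.2 ≤ 0)) : energyExt d γ cv x = ⊤ := by
  simp only [energyExt, if_neg h₁, if_neg h₂]

theorem pos_or_vacuum_of_energyExt_ne_top {x : ℝ × EuclideanSpace ℝ (Fin d) × ℝ}
    (hx : energyExt d γ cv x ≠ ⊤) : 0 < x.1 ∨ ∃ S ≤ 0, x = (0, 0, S) := by
  by_contra! h
  obtain ⟨ρ, m, S⟩ := x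
  refine hx (energyExt_eq_top (not_lt.2 h.1) ?_)
  rintro ⟨rfl, rfl, hS⟩
  exact h.2 S hS rfl

theorem energyExt_vacuum_add_le (hγ : 1 ≤ γ) (hcv : 0 < cv) {S a b : ℝ} (hS : S ≤ 0)
    {y : ℝ × EuclideanSpace ℝ (Fin d) × ℝ} (hy : 0 < y.1) (ha : 0 ≤ a) (hb : 0 < b)
    (hab : a + b = 1) :
    energyExt d γ cv (a • (0, 0, S) + b • y) ≤ ENNReal.ofReal b * energyExt d γ cv y := by
  obtain ⟨ρ, m, S'⟩ := y
  have hcomb : a • ((0 : ℝ), (0 : EuclideanSpace ℝ (Fin d)), S) + b • (ρ, m, S') =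
      (b * ρ, b • m, a * S + b * S') := by
    simp
  rw [hcomb, energyExt_of_pos (mul_pos hb hy), energyExt_of_pos hy, ← ENNReal.ofReal_mul hb.le]
  refine ENNReal.ofReal_le_ofReal ?_
  calc totalEnergy γ cv (b * ρ, b • m, a * S + b * S')
      ≤ totalEnergy γ cv (b * ρ, b • m, b * S') :=
        totalEnergy_le_of_entropy_le hcv (mul_pos hb hy) _ (by nlinarith)
    _ ≤ b * totalEnergy γ cv (ρ, m, S') := totalEnergy_smul_le hγ hcv hb (by linarith) hy m S'

theorem energyExt_add_le (hγ : 1 ≤ γ) (hcv : 0 < cv) (x y : ℝ × EuclideanSpace ℝ (Fin d) × ℝ)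
    {a b : ℝ} (ha : 0 ≤ a) (hb : 0 ≤ b) (hab : a + b = 1) :
    energyExt d γ cv (a • x + b • y) ≤
      ENNReal.ofReal a * energyExt d γ cv x + ENNReal.ofReal b * energyExt d γ cv y := by
  rcases ha.eq_or_lt with rfl | ha
  · simp [show b = 1 by linarith]
  rcases hb.eq_or_lt with rfl | hb
  · simp [show a = 1 by linarith]
  by_cases hx : energyExt d γ cv x = ⊤
  · simp [hx, ha]
  by_cases hy : energyExt d γ cv y = ⊤
  · simp [hy, hb]
  rcases pos_or_vacuum_of_energyExt_ne_top hx with hx | ⟨S₁, hS₁, rfl⟩ <;>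
    rcases pos_or_vacuum_of_energyExt_ne_top hy with hy | ⟨S₂, hS₂, rfl⟩
  · have hxy := (convexOn_totalEnergy hγ hcv).2 hx hy ha.le hb.le hab
    rw [energyExt_of_pos ((convexOn_totalEnergy hγ hcv).1 hx hy ha.le hb.le hab),
      energyExt_of_pos hx, energyExt_of_pos hy, ← ENNReal.ofReal_mul ha.le,
      ← ENNReal.ofReal_mul hb.le,
      ← ENNReal.ofReal_add (mul_nonneg ha.le (totalEnergy_nonneg hcv hx))
        (mul_nonneg hb.le (totalEnergy_nonneg hcv hy))]
    exact ENNReal.ofReal_le_ofReal hxy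
  · rw [add_comm, energyExt_vacuum hS₂, mul_zero, add_zero]
    exact energyExt_vacuum_add_le hγ hcv hS₂ hx hb.le ha (by linarith)
  · rw [energyExt_vacuum hS₁, mul_zero, zero_add]
    exact energyExt_vacuum_add_le hγ hcv hS₁ hy ha.le hb hab
  · have hcomb : a • ((0 : ℝ), (0 : EuclideanSpace ℝ (Fin d)), S₁) + b • (0, 0, S₂) =
        (0, 0, a * S₁ + b * S₂) := by
      simp
    rw [hcomb, energyExt_vacuum (by nlinarith)]
    exact zero_le

theorem continuousAt_energyExt (hcv : 0 < cv) {x : ℝ × EuclideanSpace ℝ (Fin d) × ℝ}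
    (hx : ¬(x.1 = 0 ∧ x.2.1 = 0 ∧ x.2.2 ≤ 0)) : ContinuousAt (energyExt d γ cv) x := by
  rcases lt_trichotomy x.1 0 with hneg | hzero | hpos
  · refine (continuousAt_const (y := ⊤)).congr ?_
    filter_upwards [continuous_fst.continuousAt.eventually (gt_mem_nhds hneg)] with w hw
    exact (energyExt_eq_top hw.not_gt fun h => hw.ne h.1).symm
  · obtain ⟨ρ, m, S⟩ := x
    obtain rfl : ρ = 0 := hzero
    have hmS : m ≠ 0 ∨ 0 < S := by simpa [or_iff_not_imp_left] using hx
    have htop : energyExt d γ cv (0, m, S) = ⊤ := energyExt_eq_top (lt_irrefl 0) hx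
    rw [← continuousWithinAt_univ,
      ← union_compl_self {w : ℝ × EuclideanSpace ℝ (Fin d) × ℝ | 0 < w.1},
      continuousWithinAt_union, ContinuousWithinAt, ContinuousWithinAt, htop]
    constructor
    · refine (ENNReal.tendsto_ofReal_atTop.comp
        (tendsto_totalEnergy_atTop (γ := γ) hcv hmS)).congr' ?_
      filter_upwards [self_mem_nhdsWithin] with w hw
      exact (energyExt_of_pos hw).symm
    · have hopen : IsOpen {w : ℝ × EuclideanSpace ℝ (Fin d) × ℝ | w.2.1 ≠ 0 ∨ 0 < w.2.2} :=
        (isOpen_ne_fun continuous_snd.fst continuous_const).union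
          (isOpen_lt continuous_const continuous_snd.snd)
      refine tendsto_const_nhds.congr' ?_
      filter_upwards [self_mem_nhdsWithin, nhdsWithin_le_nhds (hopen.mem_nhds hmS)]
        with w hw hw'
      refine (energyExt_eq_top hw ?_).symm
      rintro ⟨-, hm, hS⟩
      exact hw'.elim (· hm) hS.not_gt
  · refine (ENNReal.continuous_ofReal.continuousAt.comp
      (continuousAt_totalEnergy (γ := γ) hcv.ne' hpos.ne')).congr ?_
    filter_upwards [continuous_fst.continuousAt.eventually (lt_mem_nhds hpos)] with w hw
    exact (energyExt_of_pos hw).symm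

theorem lowerSemicontinuous_energyExt (hcv : 0 < cv) :
    LowerSemicontinuous (energyExt d γ cv) := by
  rintro ⟨ρ, m, S⟩
  by_cases hx : ρ = 0 ∧ m = 0 ∧ S ≤ 0
  · obtain ⟨rfl, rfl, hS⟩ := hx
    intro z hz
    simp [energyExt_vacuum hS] at hz
  · exact (continuousAt_energyExt hcv hx).lowerSemicontinuousAt

end EnergyExt

theorem energyExt_convex_lowerSemicontinuous_general (d : ℕ) (γ : ℝ) (hγ : 1 < γ)
    (cv : ℝ) (hcv : cv = 1 / (γ - 1)) :
    (∀ x y : ℝ × EuclideanSpace ℝ (Fin d) × ℝ, ∀ a b : ℝ, 0 ≤ a → 0 ≤ b → a + b = 1 →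
      energyExt d γ cv (a • x + b • y) ≤
        ENNReal.ofReal a * energyExt d γ cv x + ENNReal.ofReal b * energyExt d γ cv y) ∧
    LowerSemicontinuous (energyExt d γ cv) := by
  have hcv₀ : 0 < cv := by rw [hcv]; exact one_div_pos.2 (sub_pos.2 hγ)
  exact ⟨fun x y a b ha hb hab => energyExt_add_le hγ.le hcv₀ x y ha hb hab,
    lowerSemicontinuous_energyExt hcv₀⟩

/-- The extended energy is convex and lower semi-continuous on `ℝ × ℝ^d × ℝ`. -/
theorem energyExt_convex_lowerSemicontinuous (d : ℕ) (hd : 1 ≤ d) (γ : ℝ) (hγ : 1 < γ)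
    (cv : ℝ) (hcv : cv = 1 / (γ - 1)) :
    (∀ x y : ℝ × EuclideanSpace ℝ (Fin d) × ℝ, ∀ a b : ℝ, 0 ≤ a → 0 ≤ b → a + b = 1 →
      energyExt d γ cv (a • x + b • y) ≤
        ENNReal.ofReal a * energyExt d γ cv x + ENNReal.ofReal b * energyExt d γ cv y) ∧
    LowerSemicontinuous (energyExt d γ cv) :=
  energyExt_convex_lowerSemicontinuous_general d γ hγ cv hcv
end

section
/- If a finite positive symmetric-matrix-valued Radon measure D on ℝ^d satisfies ∫ ∇φ : dD = 0 for all compactly supported C¹ vector fields φ : ℝ^d → ℝ^d, then D = 0. -/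
/-!
Rescaling a compactly supported `C¹` field, `φ_c x = c⁻¹ • ψ (c • x)`, gives `∇φ_c x = ∇ψ (c • x)`,
which stays bounded and tends to `∇ψ 0` as `c → 0`. By dominated convergence the hypothesis then
yields `∇ψ 0 : D(ℝ^d) = 0`, and choosing `∇ψ 0 = a ⊗ b` shows that `D` has total mass zero.
Hence each nonnegative measure `ξᵀ D ξ` vanishes, and polarization (`D` is symmetric) gives `D = 0`.
-/

open MeasureTheory Filter Topology

noncomputable def sInt {α : Type*} [MeasurableSpace α] (s : SignedMeasure α) (f : α → ℝ) : ℝ :=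
  (∫ x, f x ∂s.toJordanDecomposition.posPart) - ∫ x, f x ∂s.toJordanDecomposition.negPart

theorem fderiv_inv_smul_comp_smul {𝕜 E F : Type*} [NontriviallyNormedField 𝕜]
    [NormedAddCommGroup E] [NormedSpace 𝕜 E] [NormedAddCommGroup F] [NormedSpace 𝕜 F]
    (f : E → F) {c : 𝕜} (hc : c ≠ 0) (x : E) :
    fderiv 𝕜 (fun y => c⁻¹ • f (c • y)) x = fderiv 𝕜 f (c • x) := by
  change fderiv 𝕜 (c⁻¹ • fun y => f (c • y)) x = _
  rw [fderiv_const_smul_field, Pi.smul_apply, fderiv_comp_smul, inv_smul_smul₀ hc]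

theorem tendsto_integral_comp_smul {E : Type*} [NormedAddCommGroup E] [NormedSpace ℝ E]
    [MeasurableSpace E] [OpensMeasurableSpace E] (μ : Measure E) [IsFiniteMeasure μ]
    {g : E → ℝ} (hg : Continuous g) (hgc : HasCompactSupport g)
    {c : ℕ → ℝ} (hc : Tendsto c atTop (𝓝 0)) :
    Tendsto (fun n => ∫ x, g (c n • x) ∂μ) atTop (𝓝 (μ.real Set.univ * g 0)) := by
  obtain ⟨C, hC⟩ := hgc.exists_bound_of_continuous hg
  have hlim : ∀ x, Tendsto (fun n => g (c n • x)) atTop (𝓝 (g 0)) := fun x => by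
    have := (hg.tendsto (0 • x)).comp (hc.smul_const x)
    rwa [zero_smul] at this
  simpa [smul_eq_mul] using tendsto_integral_of_dominated_convergence (fun _ => C)
    (fun n => (hg.comp (continuous_const_smul (c n))).aestronglyMeasurable)
    (integrable_const C) (fun n => Eventually.of_forall fun x => hC _)
    (Eventually.of_forall hlim)

theorem tendsto_sInt_comp_smul {E : Type*} [NormedAddCommGroup E] [NormedSpace ℝ E]
    [MeasurableSpace E] [OpensMeasurableSpace E] (s : SignedMeasure E)
    {g : E → ℝ} (hg : Continuous g) (hgc : HasCompactSupport g)
    {c : ℕ → ℝ} (hc : Tendsto c atTop (𝓝 0)) :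
    Tendsto (fun n => sInt s fun x => g (c n • x)) atTop (𝓝 (s Set.univ * g 0)) := by
  rw [s.apply_eq_posPart_real_sub_negPart_real MeasurableSet.univ, sub_mul]
  exact (tendsto_integral_comp_smul _ hg hgc hc).sub (tendsto_integral_comp_smul _ hg hgc hc)

theorem SignedMeasure.eq_zero_of_nonneg_of_apply_univ_eq_zero {α : Type*} [MeasurableSpace α]
    {s : SignedMeasure α} (hs : ∀ A, MeasurableSet A → 0 ≤ s A) (huniv : s Set.univ = 0) :
    s = 0 := by
  ext A hA
  have hsplit := s.of_union disjoint_compl_right hA hA.compl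
  rw [Set.union_compl_self, huniv] at hsplit
  have := hs A hA
  have := hs Aᶜ hA.compl
  simp only [zero_apply]
  linarith

theorem eq_zero_of_sum_mul_smul_eq_zero {ι K M : Type*} [Fintype ι] [Field K] [CharZero K]
    [AddCommGroup M] [Module K M] {D : ι → ι → M} (hsymm : ∀ i j, D i j = D j i)
    (hD : ∀ ξ : ι → K, ∑ i, ∑ j, (ξ i * ξ j) • D i j = 0) : D = 0 := by
  classical
  have hdiag : ∀ i, D i i = 0 := fun i => by
    simpa [Pi.single_apply, ite_smul] using hD (Pi.single i 1)
  ext i j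
  have h := hD (Pi.single i 1 + Pi.single j 1)
  simp only [Pi.add_apply, Pi.single_apply, mul_add, mul_ite, mul_one, mul_zero, add_smul,
    ite_smul, one_smul, zero_smul, Finset.sum_add_distrib, Finset.sum_ite_eq', Finset.mem_univ,
    ↓reduceIte, hdiag, hsymm j i, zero_add, add_zero] at h
  rw [← two_smul K, smul_eq_zero] at h
  exact h.resolve_left two_ne_zero

section DivergenceFree

variable {ι : Type*} [Fintype ι] [DecidableEq ι]

-- `∑ⱼ ∂ⱼ Dᵢⱼ = 0` for every `i`, in the sense of distributions.
def IsDivergenceFree (D : ι → ι → SignedMeasure (EuclideanSpace ℝ ι)) : Prop :=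
  ∀ φ : EuclideanSpace ℝ ι → ι → ℝ, ContDiff ℝ 1 φ → HasCompactSupport φ →
    ∑ i, ∑ j, sInt (D i j) (fun x => fderiv ℝ (fun y => φ y i) x (EuclideanSpace.single j 1)) = 0

variable {D : ι → ι → SignedMeasure (EuclideanSpace ℝ ι)}

theorem sum_apply_univ_mul_fderiv_eq_zero
    (hdiv : IsDivergenceFree D)
    {ψ : EuclideanSpace ℝ ι → ι → ℝ} (hψ : ContDiff ℝ 1 ψ) (hψc : HasCompactSupport ψ) :
    ∑ i, ∑ j, D i j Set.univ * fderiv ℝ (fun y => ψ y i) 0 (EuclideanSpace.single j 1) = 0 := by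
  set c : ℕ → ℝ := fun n => 1 / ((n : ℝ) + 1)
  have hc0 : ∀ n, c n ≠ 0 := fun n => by positivity
  set g : ι → ι → EuclideanSpace ℝ ι → ℝ :=
    fun i j y => fderiv ℝ (fun z => ψ z i) y (EuclideanSpace.single j 1)
  have hg : ∀ i j, Continuous (g i j) := fun i j =>
    ((contDiff_pi.1 hψ i).continuous_fderiv one_ne_zero).clm_apply continuous_const
  have hgc : ∀ i j, HasCompactSupport (g i j) := fun i j =>
    (hψc.comp_left (g := fun v : ι → ℝ => v i) rfl).fderiv_apply ℝ _
  -- `x ↦ c⁻¹ ψ (c x)` is admissible and its gradient is `∇ψ (c x)`.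
  have hrescaled : ∀ n, ∑ i, ∑ j, sInt (D i j) (fun x => g i j (c n • x)) = 0 := by
    intro n
    have h1 : ContDiff ℝ 1 (fun y => (c n)⁻¹ • ψ (c n • y)) :=
      (hψ.comp (contDiff_id.const_smul _)).const_smul _
    have h2 : HasCompactSupport (fun y => (c n)⁻¹ • ψ (c n • y)) :=
      (hψc.comp_smul (hc0 n)).mono (Function.support_const_smul_subset (c n)⁻¹ fun y => ψ (c n • y))
    refine Eq.trans ?_ (hdiv _ h1 h2)
    refine Finset.sum_congr rfl fun i _ => Finset.sum_congr rfl fun j _ => ?_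
    congr 1
    funext x
    exact congrArg (· (EuclideanSpace.single j 1))
      (fderiv_inv_smul_comp_smul (fun z => ψ z i) (hc0 n) x).symm
  have hlim := tendsto_finsetSum Finset.univ fun i _ => tendsto_finsetSum Finset.univ fun j _ =>
    tendsto_sInt_comp_smul (D i j) (hg i j) (hgc i j) (c := c)
      tendsto_one_div_add_atTop_nhds_zero_nat
  simp only [hrescaled] at hlim
  exact tendsto_nhds_unique hlim tendsto_const_nhds

theorem sum_mul_mul_apply_univ_eq_zero
    (hdiv : IsDivergenceFree D)
    (a b : ι → ℝ) :
    ∑ i, ∑ j, a i * b j * D i j Set.univ = 0 := by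
  let bump : ContDiffBump (0 : EuclideanSpace ℝ ι) := ⟨1, 2, one_pos, one_lt_two⟩
  let B : EuclideanSpace ℝ ι →L[ℝ] ℝ := innerSL ℝ (WithLp.toLp 2 b)
  let ψ : EuclideanSpace ℝ ι → ι → ℝ := fun y i => a i * (bump y * B y)
  have hψ : ContDiff ℝ 1 ψ :=
    contDiff_pi.2 fun i => contDiff_const.mul (bump.contDiff.mul B.contDiff)
  have hψc : HasCompactSupport ψ := by
    refine bump.hasCompactSupport.mono fun y hy h0 => hy ?_
    ext i
    simp [ψ, h0]
  -- `ψ` is the linear field `y ↦ ⟪b, y⟫ a` near the origin.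
  have hderiv : ∀ i j, fderiv ℝ (fun y => ψ y i) 0 (EuclideanSpace.single j 1) = a i * b j := by
    intro i j
    have hloc : (fun y => ψ y i) =ᶠ[𝓝 0] fun y => a i * B y := by
      filter_upwards [Metric.ball_mem_nhds (0 : EuclideanSpace ℝ ι) one_pos] with y hy
      simp [ψ, bump.one_of_mem_closedBall (Metric.ball_subset_closedBall hy)]
    rw [hloc.fderiv_eq, fderiv_const_mul B.differentiableAt, B.fderiv]
    simp [B, EuclideanSpace.inner_single_right]
  simpa [hderiv, mul_comm] using sum_apply_univ_mul_fderiv_eq_zero hdiv hψ hψc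

end DivergenceFree

theorem matrixMeasure_eq_zero_of_gradient_orthogonal_general (d : ℕ)
    (D : Fin d → Fin d → SignedMeasure (EuclideanSpace ℝ (Fin d)))
    (hsymm : ∀ i j, D i j = D j i)
    (hpsd : ∀ (ξ : Fin d → ℝ) (A : Set (EuclideanSpace ℝ (Fin d))), MeasurableSet A →
      0 ≤ ∑ i, ∑ j, ξ i * ξ j * (D i j) A)
    (hdiv : ∀ φ : EuclideanSpace ℝ (Fin d) → Fin d → ℝ,
      ContDiff ℝ 1 φ → HasCompactSupport φ →
      ∑ i, ∑ j, sInt (D i j)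
        (fun x => fderiv ℝ (fun y => φ y i) x (EuclideanSpace.single j 1)) = 0) :
    ∀ i j, D i j = 0 := by
  have hquad : ∀ ξ : Fin d → ℝ, ∑ i, ∑ j, (ξ i * ξ j) • D i j = 0 := fun ξ =>
    SignedMeasure.eq_zero_of_nonneg_of_apply_univ_eq_zero (by simpa using hpsd ξ)
      (by simpa using sum_mul_mul_apply_univ_eq_zero hdiv ξ ξ)
  intro i j
  rw [eq_zero_of_sum_mul_smul_eq_zero hsymm hquad]
  rfl

/-- If a positive semidefinite symmetric-matrix-valued finite Radon measure `D` on `ℝ^d`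
annihilates the gradients of all compactly supported `C¹` vector fields, then `D = 0`. -/
theorem matrixMeasure_eq_zero_of_gradient_orthogonal (d : ℕ) (hd : 1 ≤ d)
    (D : Fin d → Fin d → SignedMeasure (EuclideanSpace ℝ (Fin d)))
    (hsymm : ∀ i j, D i j = D j i)
    (hpsd : ∀ (ξ : Fin d → ℝ) (A : Set (EuclideanSpace ℝ (Fin d))), MeasurableSet A →
      0 ≤ ∑ i, ∑ j, ξ i * ξ j * (D i j) A)
    (hdiv : ∀ φ : EuclideanSpace ℝ (Fin d) → Fin d → ℝ,
      ContDiff ℝ 1 φ → HasCompactSupport φ →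
      ∑ i, ∑ j, sInt (D i j)
        (fun x => fderiv ℝ (fun y => φ y i) x (EuclideanSpace.single j 1)) = 0) :
    ∀ i j, D i j = 0 :=
  matrixMeasure_eq_zero_of_gradient_orthogonal_general d D hsymm hpsd hdiv
end

section
/- Let B be a bounded measurable set, (ρ_n) non-negative measurable functions and (m_n) measurable vector fields on B such that sup_n ∫_B |m_n|²/ρ_n dx < ∞ (with the convention |m|²/ρ = ∞ if ρ = 0, m ≠ 0, and 0 if ρ = m = 0), and (ρ_n) uniformly integrable on B. Then (m_n) is uniformly integrable on B. -/
/-!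
Pointwise, `|m| ≤ c ρ + c⁻¹ |m|²/ρ` for every `c > 0`: by AM–GM where `ρ > 0`, and by the
convention `|m|²/0 = ∞` for `m ≠ 0` where `ρ = 0`. Integrating over a set `s ⊆ B`
gives `∫_s |m_n| ≤ c ∫_s ρ_n + C / c`: choose `c` so large that `C / c ≤ ε / 2`, and then `s` so
small that `c ∫_s ρ_n ≤ ε / 2` for all `n` by uniform integrability of the densities.
-/

open MeasureTheory
open scoped ENNReal

open Classical in
/-- Extended kinetic energy `|m|²/ρ`, with the conventions `0` if `ρ = 0, m = 0`
and `∞` if `ρ = 0, m ≠ 0`. -/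
noncomputable def kinExt (N d : ℕ) (ρ : ℝ) (m : EuclideanSpace ℝ (Fin d)) : ℝ≥0∞ :=
  if 0 < ρ then ENNReal.ofReal (‖m‖ ^ 2 / ρ) else if m = 0 then 0 else ⊤

lemma le_mul_add_inv_mul_sq_div {c ρ a : ℝ} (hc : 0 < c) (hρ : 0 < ρ) (ha : 0 ≤ a) :
    a ≤ c * ρ + c⁻¹ * (a ^ 2 / ρ) := by
  have hsplit : c * ρ + c⁻¹ * (a ^ 2 / ρ) - a = ((c * ρ - a) ^ 2 + a * (c * ρ)) / (c * ρ) := by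
    field_simp; ring
  rw [← sub_nonneg, hsplit]
  positivity

lemma enorm_le_mul_add_inv_mul_kinExt (N : ℕ) {d : ℕ} {c : ℝ} (hc : 0 < c) (ρ : ℝ)
    (m : EuclideanSpace ℝ (Fin d)) :
    ‖m‖ₑ ≤ ENNReal.ofReal c * ENNReal.ofReal ρ + (ENNReal.ofReal c)⁻¹ * kinExt N d ρ m := by
  unfold kinExt
  split_ifs with hρ hm
  · rw [← ofReal_norm, ← ENNReal.ofReal_mul hc.le, ← ENNReal.ofReal_inv_of_pos hc,
      ← ENNReal.ofReal_mul (inv_nonneg.2 hc.le), ← ENNReal.ofReal_add (by positivity)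
      (by positivity)]
    exact ENNReal.ofReal_le_ofReal (le_mul_add_inv_mul_sq_div hc hρ (norm_nonneg m))
  · simp [hm]
  · simp [ENNReal.mul_top]

section

variable {α : Type*} [MeasurableSpace α] {μ : Measure α}

lemma Measurable.kinExt (N : ℕ) {d : ℕ} {ρ : α → ℝ} {m : α → EuclideanSpace ℝ (Fin d)}
    (hρ : Measurable ρ) (hm : Measurable m) : Measurable fun y ↦ kinExt N d (ρ y) (m y) := by
  unfold _root_.kinExt
  refine Measurable.ite (measurableSet_lt measurable_const hρ) ?_ ?_
  · exact ((hm.norm.pow_const 2).div hρ).ennreal_ofReal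
  · exact Measurable.ite (measurableSet_eq_fun hm measurable_const) measurable_const
      measurable_const

/-- The hypothesis only controls Bochner integrals, which vanish on non-integrable functions;
on the sets where `ρ ≤ R` the function is bounded, and these sets exhaust `s`. -/
lemma setLIntegral_ofReal_le_of_forall_setIntegral_le {ρ : α → ℝ} {s : Set α} {ε : ℝ}
    (hρ : Measurable ρ) (hnn : ∀ y, 0 ≤ ρ y) (hs : MeasurableSet s) (hμs : μ s ≠ ∞)
    (h : ∀ t ⊆ s, MeasurableSet t → ∫ y in t, ρ y ∂μ ≤ ε) :
    ∫⁻ y in s, ENNReal.ofReal (ρ y) ∂μ ≤ ENNReal.ofReal ε := by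
  set t : ℕ → Set α := fun R ↦ s ∩ {y | ρ y ≤ R}
  have ht_mono : Monotone t := fun R R' hR ↦
    Set.inter_subset_inter_right _ fun y (hy : ρ y ≤ R) ↦ hy.trans (Nat.mono_cast hR)
  have ht_union : ⋃ R, t R = s := by
    refine Set.Subset.antisymm (Set.iUnion_subset fun R ↦ Set.inter_subset_left) fun y hy ↦ ?_
    obtain ⟨R, hR⟩ := exists_nat_ge (ρ y)
    exact Set.mem_iUnion.2 ⟨R, hy, hR⟩
  rw [← ht_union, setLIntegral_iUnion_of_directed _ ht_mono.directed_le]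
  refine iSup_le fun R ↦ ?_
  have ht : MeasurableSet (t R) := hs.inter (measurableSet_le hρ measurable_const)
  have hint : IntegrableOn ρ (t R) μ := by
    refine Measure.integrableOn_of_bounded (M := R)
      (ne_top_of_le_ne_top hμs (measure_mono Set.inter_subset_left)) hρ.aestronglyMeasurable ?_
    filter_upwards [ae_restrict_mem ht] with y hy
    rw [Real.norm_of_nonneg (hnn y)]
    exact hy.2
  rw [← ofReal_integral_eq_lintegral_ofReal hint (ae_of_all _ hnn)]
  exact ENNReal.ofReal_le_ofReal (h _ Set.inter_subset_left ht)

lemma setLIntegral_enorm_le_of_kinExt (N : ℕ) {d : ℕ} {ρ : α → ℝ}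
    {m : α → EuclideanSpace ℝ (Fin d)} {s : Set α} {c η C : ℝ} (hρ : Measurable ρ)
    (hm : Measurable m) (hc : 0 < c) (hη : 0 ≤ η) (hC : 0 ≤ C)
    (hρs : ∫⁻ y in s, ENNReal.ofReal (ρ y) ∂μ ≤ ENNReal.ofReal η)
    (hkin : ∫⁻ y in s, kinExt N d (ρ y) (m y) ∂μ ≤ ENNReal.ofReal C) :
    ∫⁻ y in s, ‖m y‖ₑ ∂μ ≤ ENNReal.ofReal (c * η + C / c) := by
  calc ∫⁻ y in s, ‖m y‖ₑ ∂μ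
      ≤ ∫⁻ y in s, (ENNReal.ofReal c * ENNReal.ofReal (ρ y)
          + (ENNReal.ofReal c)⁻¹ * kinExt N d (ρ y) (m y)) ∂μ :=
        lintegral_mono fun y ↦ enorm_le_mul_add_inv_mul_kinExt N hc (ρ y) (m y)
    _ = ENNReal.ofReal c * ∫⁻ y in s, ENNReal.ofReal (ρ y) ∂μ
          + (ENNReal.ofReal c)⁻¹ * ∫⁻ y in s, kinExt N d (ρ y) (m y) ∂μ := by
        rw [lintegral_add_left (hρ.ennreal_ofReal.const_mul _),
          lintegral_const_mul _ hρ.ennreal_ofReal, lintegral_const_mul _ (hρ.kinExt N hm)]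
    _ ≤ ENNReal.ofReal c * ENNReal.ofReal η + (ENNReal.ofReal c)⁻¹ * ENNReal.ofReal C := by
        gcongr
    _ = ENNReal.ofReal (c * η + C / c) := by
        rw [← ENNReal.ofReal_inv_of_pos hc, ← ENNReal.ofReal_mul hc.le,
          ← ENNReal.ofReal_mul (inv_nonneg.2 hc.le), ← ENNReal.ofReal_add (by positivity)
          (by positivity), inv_mul_eq_div]

end

theorem momentum_unifIntegrable_general (N d : ℕ)
    (B : Set (EuclideanSpace ℝ (Fin N)))
    (ρ : ℕ → EuclideanSpace ℝ (Fin N) → ℝ) (hρm : ∀ n, Measurable (ρ n))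
    (hnn : ∀ n y, 0 ≤ ρ n y)
    (m : ℕ → EuclideanSpace ℝ (Fin N) → EuclideanSpace ℝ (Fin d))
    (hmm : ∀ n, Measurable (m n))
    (hkin : ∃ C : ℝ, ∀ n, ∫⁻ y in B, kinExt N d (ρ n y) (m n y) ≤ ENNReal.ofReal C)
    (hρui : ∀ ε > (0 : ℝ), ∃ δ > (0 : ℝ), ∀ n, ∀ s ⊆ B, MeasurableSet s →
      volume s ≤ ENNReal.ofReal δ → ∫ y in s, ρ n y ≤ ε) :
    ∀ ε > (0 : ℝ), ∃ δ > (0 : ℝ), ∀ n, ∀ s ⊆ B, MeasurableSet s →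
      volume s ≤ ENNReal.ofReal δ → ∫ y in s, ‖m n y‖ ≤ ε := by
  obtain ⟨C, hC⟩ := hkin
  intro ε hε
  set K := max C 1
  have hK : 0 < K := lt_max_of_lt_right one_pos
  set c := 2 * K / ε
  have hc : 0 < c := by positivity
  obtain ⟨δ, hδ, hρδ⟩ := hρui (ε / (2 * c)) (by positivity)
  refine ⟨δ, hδ, fun n s hsB hs hsδ ↦ ?_⟩
  have hρs := setLIntegral_ofReal_le_of_forall_setIntegral_le (hρm n) (hnn n) hs
    (ne_top_of_le_ne_top ENNReal.ofReal_ne_top hsδ)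
    fun t hts ht ↦ hρδ n t (hts.trans hsB) ht ((measure_mono hts).trans hsδ)
  have hkins : ∫⁻ y in s, kinExt N d (ρ n y) (m n y) ≤ ENNReal.ofReal K :=
    (lintegral_mono_set hsB).trans ((hC n).trans (ENNReal.ofReal_le_ofReal (le_max_left _ _)))
  have hbound := setLIntegral_enorm_le_of_kinExt N (hρm n) (hmm n) hc (by positivity) hK.le
    hρs hkins
  have hsum : c * (ε / (2 * c)) + K / c = ε := by
    simp only [c]; field_simp; ring
  rw [integral_norm_eq_lintegral_enorm (hmm n).aestronglyMeasurable]
  exact ENNReal.toReal_le_of_le_ofReal hε.le (hsum ▸ hbound)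

/-- A uniform kinetic energy bound together with uniform integrability of the densities implies
uniform integrability of the momenta. -/
theorem momentum_unifIntegrable (N d : ℕ)
    (B : Set (EuclideanSpace ℝ (Fin N))) (hBb : Bornology.IsBounded B) (hBm : MeasurableSet B)
    (ρ : ℕ → EuclideanSpace ℝ (Fin N) → ℝ) (hρm : ∀ n, Measurable (ρ n))
    (hnn : ∀ n y, 0 ≤ ρ n y)
    (m : ℕ → EuclideanSpace ℝ (Fin N) → EuclideanSpace ℝ (Fin d))
    (hmm : ∀ n, Measurable (m n))
    (hkin : ∃ C : ℝ, ∀ n, ∫⁻ y in B, kinExt N d (ρ n y) (m n y) ≤ ENNReal.ofReal C)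
    (hρui : ∀ ε > (0 : ℝ), ∃ δ > (0 : ℝ), ∀ n, ∀ s ⊆ B, MeasurableSet s →
      volume s ≤ ENNReal.ofReal δ → ∫ y in s, ρ n y ≤ ε) :
    ∀ ε > (0 : ℝ), ∃ δ > (0 : ℝ), ∀ n, ∀ s ⊆ B, MeasurableSet s →
      volume s ≤ ENNReal.ofReal δ → ∫ y in s, ‖m n y‖ ≤ ε :=
  momentum_unifIntegrable_general N d B ρ hρm hnn m hmm hkin hρui
end

section
/- Let ν be a probability measure on ℝ^{d+2} supported in the domain where the convex l.s.c. energy e is finite, and suppose ⟨ν, e⟩ = e(⟨ν, id⟩) < ∞, where e is strictly convex on its domain of positivity {ρ > 0}. Then either ν is the Dirac measure at its barycenter, or ν is supported in the degenerate set {(ρ, m, S) : ρ = 0, m = 0, S ≤ 0}. -/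
/-!
At a point `b = (ρ₀, m₀, S₀)` with `ρ₀ > 0` the energy has the supporting affine function
`e b + ∇e(b) (x - b)`, where `∇e(b) = (-|u|²/2 + c_v θ (γ - S₀/(c_v ρ₀)), u, θ)` in terms of the
velocity `u = m₀/ρ₀` and the temperature `θ = ρ₀^(γ-1) exp (S₀/(c_v ρ₀))`. Off `b` the gap is
`|m - ρ u|²/(2ρ) + c_v ρ₀ θ (l^γ e^δ - 1 - γ (l - 1) - l δ)` with `l = ρ/ρ₀` and
`δ = S/(c_v ρ) - S₀/(c_v ρ₀)`; it is positive since `l^γ e^δ = l exp ((γ - 1) log l + δ)`,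
`exp t ≥ 1 + t` and `l log l ≥ l - 1`. On the vacuum the gap is `θ (c_v (γ - 1) ρ₀ - S) > 0`.
Equality in Jensen's inequality forces this nonnegative gap to vanish `ν`-a.e., so `ν` is the
Dirac mass at its barycenter. If instead the barycenter has `ρ₀ = 0`, the density `ρ ≥ 0` has
mean zero, so `ρ = 0` a.e., which on the domain of `e` means the vacuum.
-/

open MeasureTheory
open scoped ENNReal

open Real

namespace Real

theorem one_add_mul_sub_one_add_mul_lt_rpow_mul_exp {γ l δ : ℝ} (hγ : 1 < γ) (hl : 0 < l)
    (hne : ¬(l = 1 ∧ δ = 0)) : 1 + γ * (l - 1) + l * δ < l ^ γ * exp δ := by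
  have hrw : l ^ γ * exp δ = l * exp ((γ - 1) * log l + δ) := by
    rw [rpow_def_of_pos hl, ← exp_add, ← exp_log hl, ← exp_add, log_exp]
    ring_nf
  rw [hrw]
  rcases eq_or_ne l 1 with rfl | hl1
  · simpa [add_comm] using add_one_lt_exp (x := δ) (by simpa using hne)
  · have hlog := mul_lt_mul_of_pos_left (self_sub_one_lt_mul_log hl.le hl1) (sub_pos.2 hγ)
    calc 1 + γ * (l - 1) + l * δ < l * ((γ - 1) * log l + δ + 1) := by linarith
      _ ≤ l * exp ((γ - 1) * log l + δ) := mul_le_mul_of_nonneg_left (add_one_le_exp _) hl.le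

end Real

theorem ae_eq_integral_id_of_integral_eq_of_strict_support {E : Type*} [NormedAddCommGroup E]
    [NormedSpace ℝ E] [CompleteSpace E] [MeasurableSpace E] {μ : Measure E}
    [IsProbabilityMeasure μ] {f : E → ℝ} {ℓ : E →L[ℝ] ℝ} {s : Set E}
    (hid : Integrable (fun x => x) μ) (hf : Integrable f μ) (hs : ∀ᵐ x ∂μ, x ∈ s)
    (hℓ : ∀ x ∈ s, x ≠ ∫ y, y ∂μ → f (∫ y, y ∂μ) + ℓ (x - ∫ y, y ∂μ) < f x)
    (heq : ∫ x, f x ∂μ = f (∫ x, x ∂μ)) : ∀ᵐ x ∂μ, x = ∫ y, y ∂μ := by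
  set b := ∫ y, y ∂μ
  have hsub : Integrable (fun x => x - b) μ := hid.sub (integrable_const b)
  have hℓ_zero : ∫ x, ℓ (x - b) ∂μ = 0 := by
    rw [ℓ.integral_comp_comm hsub, integral_sub hid (integrable_const b)]
    simp [b]
  have hsupport : Integrable (fun x => f b + ℓ (x - b)) μ :=
    (integrable_const _).add (ℓ.integrable_comp hsub)
  have hgap_int : Integrable (fun x => f x - (f b + ℓ (x - b))) μ := hf.sub hsupport
  have hgap_zero : ∫ x, f x - (f b + ℓ (x - b)) ∂μ = 0 := by
    rw [integral_sub hf hsupport,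
      integral_add (integrable_const _) (ℓ.integrable_comp hsub), heq, hℓ_zero]
    simp
  have hgap_nonneg : 0 ≤ᵐ[μ] fun x => f x - (f b + ℓ (x - b)) := by
    filter_upwards [hs] with x hx
    by_cases hxb : x = b
    · simp [hxb]
    · exact (sub_pos.2 (hℓ x hx hxb)).le
  filter_upwards [hs, (integral_eq_zero_iff_of_nonneg_ae hgap_nonneg hgap_int).1 hgap_zero]
    with x hx hx0
  by_contra hxb
  exact (sub_pos.2 (hℓ x hx hxb)).ne' hx0

theorem MeasureTheory.Measure.eq_dirac_of_ae_eq {α : Type*} [MeasurableSpace α] {μ : Measure α}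
    [IsProbabilityMeasure μ] {a : α} (h : ∀ᵐ x ∂μ, x = a) : μ = Measure.dirac a := by
  simpa using (ProbabilityTheory.hasLaw_dirac_of_ae_eq (X := id) h).map_eq

section Internal

variable {γ cv : ℝ}

noncomputable def internalEnergy (γ cv ρ S : ℝ) : ℝ := cv * ρ ^ γ * exp (S / (cv * ρ))

noncomputable def temperature (γ cv ρ S : ℝ) : ℝ := ρ ^ (γ - 1) * exp (S / (cv * ρ))

theorem internalEnergy_eq_mul_temperature {ρ : ℝ} (hρ : 0 < ρ) (S : ℝ) :
    internalEnergy γ cv ρ S = cv * ρ * temperature γ cv ρ S := by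
  rw [internalEnergy, temperature, rpow_sub_one hρ.ne']
  field_simp

theorem internalEnergy_eq_add {ρ₀ S₀ ρ S : ℝ} (hcv : cv ≠ 0) (hρ₀ : 0 < ρ₀) (hρ : 0 < ρ) :
    internalEnergy γ cv ρ S = internalEnergy γ cv ρ₀ S₀
      + temperature γ cv ρ₀ S₀ * (cv * (γ - S₀ / (cv * ρ₀)) * (ρ - ρ₀) + (S - S₀))
      + cv * ρ₀ * temperature γ cv ρ₀ S₀ * ((ρ / ρ₀) ^ γ * exp (S / (cv * ρ) - S₀ / (cv * ρ₀))
        - (1 + γ * (ρ / ρ₀ - 1) + ρ / ρ₀ * (S / (cv * ρ) - S₀ / (cv * ρ₀)))) := by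
  have hscale : (ρ / ρ₀) ^ γ * exp (S / (cv * ρ) - S₀ / (cv * ρ₀))
      * (cv * ρ₀ * temperature γ cv ρ₀ S₀) = internalEnergy γ cv ρ S := by
    rw [← internalEnergy_eq_mul_temperature hρ₀, internalEnergy, internalEnergy,
      div_rpow hρ.le hρ₀.le, exp_sub]
    field_simp
  rw [← hscale, internalEnergy_eq_mul_temperature hρ₀]
  field_simp
  ring

theorem internalEnergy_add_lt {ρ₀ S₀ ρ S : ℝ} (hγ : 1 < γ) (hcv : 0 < cv) (hρ₀ : 0 < ρ₀)
    (hρ : 0 < ρ) (hne : (ρ, S) ≠ (ρ₀, S₀)) :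
    internalEnergy γ cv ρ₀ S₀
      + temperature γ cv ρ₀ S₀ * (cv * (γ - S₀ / (cv * ρ₀)) * (ρ - ρ₀) + (S - S₀))
      < internalEnergy γ cv ρ S := by
  have hl : ¬(ρ / ρ₀ = 1 ∧ S / (cv * ρ) - S₀ / (cv * ρ₀) = 0) := by
    rintro ⟨hl, hδ⟩
    obtain rfl : ρ = ρ₀ := (div_eq_one_iff_eq hρ₀.ne').1 hl
    obtain rfl : S = S₀ := by
      field_simp at hδ
      linarith
    exact hne rfl
  have hcoef : 0 < cv * ρ₀ * temperature γ cv ρ₀ S₀ := by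
    unfold temperature
    positivity
  have hgap := mul_pos hcoef
    (sub_pos.2 (one_add_mul_sub_one_add_mul_lt_rpow_mul_exp hγ (div_pos hρ hρ₀) hl))
  rw [internalEnergy_eq_add hcv.ne' hρ₀ hρ (S₀ := S₀)]
  linarith

theorem internalEnergy_add_vacuum {ρ₀ S₀ : ℝ} (hcv : cv ≠ 0) (hρ₀ : 0 < ρ₀) (S : ℝ) :
    internalEnergy γ cv ρ₀ S₀
      + temperature γ cv ρ₀ S₀ * (cv * (γ - S₀ / (cv * ρ₀)) * (0 - ρ₀) + (S - S₀))
      = temperature γ cv ρ₀ S₀ * (S - cv * (γ - 1) * ρ₀) := by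
  rw [internalEnergy_eq_mul_temperature hρ₀]
  field_simp
  ring

end Internal

section Energy

variable {V : Type*} [NormedAddCommGroup V] [InnerProductSpace ℝ V]

noncomputable def kineticEnergy (ρ : ℝ) (m : V) : ℝ := ‖m‖ ^ 2 / (2 * ρ)

theorem kineticEnergy_eq_add_sq {ρ : ℝ} (hρ : ρ ≠ 0) (ρ₀ : ℝ) (u m : V) :
    kineticEnergy ρ m = kineticEnergy ρ₀ (ρ₀ • u)
      + (-(‖u‖ ^ 2 / 2) * (ρ - ρ₀) + inner ℝ u (m - ρ₀ • u)) + ‖m - ρ • u‖ ^ 2 / (2 * ρ) := by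
  simp only [kineticEnergy, norm_sub_sq_real, norm_smul, real_inner_smul_right, inner_sub_right,
    real_inner_self_eq_norm_sq, real_inner_comm m, Real.norm_eq_abs, mul_pow, sq_abs]
  field_simp
  ring

noncomputable def energyGrad (γ cv : ℝ) (b : ℝ × V × ℝ) : (ℝ × V × ℝ) →L[ℝ] ℝ :=
  ((-(‖b.1⁻¹ • b.2.1‖ ^ 2 / 2) + temperature γ cv b.1 b.2.2 * cv * (γ - b.2.2 / (cv * b.1)))
      • ContinuousLinearMap.id ℝ ℝ).coprod
    ((innerSL ℝ (b.1⁻¹ • b.2.1)).coprod (temperature γ cv b.1 b.2.2 • ContinuousLinearMap.id ℝ ℝ))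

@[simp]
theorem energyGrad_apply (γ cv : ℝ) (b x : ℝ × V × ℝ) :
    energyGrad γ cv b x =
      (-(‖b.1⁻¹ • b.2.1‖ ^ 2 / 2) + temperature γ cv b.1 b.2.2 * cv * (γ - b.2.2 / (cv * b.1)))
        * x.1 + inner ℝ (b.1⁻¹ • b.2.1) x.2.1 + temperature γ cv b.1 b.2.2 * x.2.2 := by
  simp only [energyGrad, ContinuousLinearMap.coprod_apply, smul_apply,
    ContinuousLinearMap.id_apply, innerSL_apply_apply, smul_eq_mul, add_assoc]

end Energy

section EnergyExt

variable {d : ℕ} {γ cv : ℝ}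

theorem energyExt_ne_top_iff {x : ℝ × EuclideanSpace ℝ (Fin d) × ℝ} :
    energyExt d γ cv x ≠ ⊤ ↔ 0 < x.1 ∨ (x.1 = 0 ∧ x.2.1 = 0 ∧ x.2.2 ≤ 0) := by
  unfold energyExt
  split_ifs <;> simp_all

theorem energyExt_toReal_of_pos (hcv : 0 ≤ cv) {x : ℝ × EuclideanSpace ℝ (Fin d) × ℝ}
    (hx : 0 < x.1) :
    (energyExt d γ cv x).toReal = kineticEnergy x.1 x.2.1 + internalEnergy γ cv x.1 x.2.2 := by
  rw [energyExt, if_pos hx, ENNReal.toReal_ofReal (by positivity)]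
  rfl

theorem measurable_energyExt : Measurable (energyExt d γ cv) := by
  have hvac : MeasurableSet
      {x : ℝ × EuclideanSpace ℝ (Fin d) × ℝ | x.1 = 0 ∧ x.2.1 = 0 ∧ x.2.2 ≤ 0} :=
    (measurableSet_eq_fun measurable_fst measurable_const).inter
      ((measurableSet_eq_fun measurable_snd.fst measurable_const).inter
        (measurableSet_le measurable_snd.snd measurable_const))
  exact Measurable.ite (measurableSet_lt measurable_const measurable_fst)
    (Measurable.ennreal_ofReal (by fun_prop))
    (Measurable.ite hvac measurable_const measurable_const)

theorem energyExt_toReal_add_lt_of_pos (hγ : 1 < γ) (hcv : 0 < cv)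
    {b x : ℝ × EuclideanSpace ℝ (Fin d) × ℝ} (hb : 0 < b.1) (hx : 0 < x.1) (hxb : x ≠ b) :
    (energyExt d γ cv b).toReal + energyGrad γ cv b (x - b) < (energyExt d γ cv x).toReal := by
  rw [energyExt_toReal_of_pos hcv.le hb, energyExt_toReal_of_pos hcv.le hx, energyGrad_apply]
  obtain ⟨ρ₀, m₀, S₀⟩ := b
  obtain ⟨ρ, m, S⟩ := x
  simp only [Prod.mk_sub_mk] at hb hx ⊢
  set u := ρ₀⁻¹ • m₀
  have hm₀ : ρ₀ • u = m₀ := smul_inv_smul₀ hb.ne' m₀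
  have hkin := kineticEnergy_eq_add_sq hx.ne' ρ₀ u m
  rw [hm₀] at hkin
  by_cases hρS : (ρ, S) = (ρ₀, S₀)
  · obtain ⟨rfl, rfl⟩ := Prod.mk.inj hρS
    have hm : m - ρ • u ≠ 0 := by
      rw [hm₀, sub_ne_zero]
      rintro rfl
      exact hxb rfl
    have : 0 < ‖m - ρ • u‖ ^ 2 / (2 * ρ) := by positivity
    simp only [sub_self, mul_zero, add_zero]
    linarith
  · have := internalEnergy_add_lt hγ hcv hb hx hρS
    have : 0 ≤ ‖m - ρ • u‖ ^ 2 / (2 * ρ) := by positivity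
    linarith

theorem energyExt_toReal_add_lt_of_vacuum (hγ : 1 < γ) (hcv : 0 < cv)
    {b x : ℝ × EuclideanSpace ℝ (Fin d) × ℝ} (hb : 0 < b.1)
    (hx : x.1 = 0 ∧ x.2.1 = 0 ∧ x.2.2 ≤ 0) :
    (energyExt d γ cv b).toReal + energyGrad γ cv b (x - b) < (energyExt d γ cv x).toReal := by
  rw [energyExt_toReal_of_pos hcv.le hb, energyGrad_apply]
  obtain ⟨ρ₀, m₀, S₀⟩ := b
  obtain ⟨ρ, m, S⟩ := x
  obtain ⟨rfl, rfl, hS⟩ : ρ = 0 ∧ m = 0 ∧ S ≤ 0 := hx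
  simp only [Prod.mk_sub_mk] at hb ⊢
  have hx0 : energyExt d γ cv (0, 0, S) = 0 := by simp [energyExt, hS]
  set u := ρ₀⁻¹ • m₀
  have hm₀ : ρ₀ • u = m₀ := smul_inv_smul₀ hb.ne' m₀
  have hkin : kineticEnergy ρ₀ m₀ + (-(‖u‖ ^ 2 / 2) * (0 - ρ₀) + inner ℝ u (0 - m₀)) = 0 := by
    simp only [← hm₀, kineticEnergy, norm_smul, zero_sub, inner_neg_right, real_inner_smul_right,
      real_inner_self_eq_norm_sq, Real.norm_eq_abs, mul_pow, sq_abs]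
    field_simp
    ring
  have hint := internalEnergy_add_vacuum (γ := γ) hcv.ne' hb S (S₀ := S₀)
  have hθ : 0 < temperature γ cv ρ₀ S₀ := by
    unfold temperature
    positivity
  have : temperature γ cv ρ₀ S₀ * (S - cv * (γ - 1) * ρ₀) < 0 :=
    mul_neg_of_pos_of_neg hθ (by linarith [mul_pos (mul_pos hcv (sub_pos.2 hγ)) hb])
  rw [hx0, ENNReal.toReal_zero]
  linarith

theorem energyExt_toReal_add_lt (hγ : 1 < γ) (hcv : 0 < cv)
    {b x : ℝ × EuclideanSpace ℝ (Fin d) × ℝ} (hb : 0 < b.1) (hx : energyExt d γ cv x ≠ ⊤)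
    (hxb : x ≠ b) :
    (energyExt d γ cv b).toReal + energyGrad γ cv b (x - b) < (energyExt d γ cv x).toReal := by
  rcases energyExt_ne_top_iff.1 hx with hx | hx
  · exact energyExt_toReal_add_lt_of_pos hγ hcv hb hx hxb
  · exact energyExt_toReal_add_lt_of_vacuum hγ hcv hb hx

end EnergyExt

theorem sharp_jensen_dirac_or_degenerate_general (d : ℕ) (γ : ℝ) (hγ : 1 < γ)
    (cv : ℝ) (hcv : cv = 1 / (γ - 1))
    (ν : Measure (ℝ × EuclideanSpace ℝ (Fin d) × ℝ)) (hprob : IsProbabilityMeasure ν)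
    -- `ν` is supported where `e` is finite:
    (hfin : ν {x | energyExt d γ cv x = ⊤} = 0)
    -- the barycenter exists:
    (hIntId : Integrable (fun x => x) ν)
    -- equality in Jensen's inequality, with finite value:
    (hjensen : ∫⁻ x, energyExt d γ cv x ∂ν = energyExt d γ cv (∫ x, x ∂ν))
    (hfinval : energyExt d γ cv (∫ x, x ∂ν) ≠ ⊤) :
    ν = Measure.dirac (∫ x, x ∂ν) ∨
      ν {x | ¬(x.1 = 0 ∧ x.2.1 = 0 ∧ x.2.2 ≤ 0)} = 0 := by
  have hcv_pos : 0 < cv := hcv ▸ one_div_pos.2 (sub_pos.2 hγ)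
  have hdom : ∀ᵐ x ∂ν, energyExt d γ cv x ≠ ⊤ := measure_eq_zero_iff_ae_notMem.1 hfin
  have hρ_nonneg : ∀ᵐ x ∂ν, 0 ≤ x.1 := hdom.mono fun x hx => by
    rcases energyExt_ne_top_iff.1 hx with hρ | hvac
    exacts [hρ.le, hvac.1.ge]
  rcases (integral_nonneg_of_ae hρ_nonneg).eq_or_lt with hρ₀ | hρ₀
  · right
    have hρ : ∀ᵐ x ∂ν, x.1 = 0 :=
      (integral_eq_zero_iff_of_nonneg_ae hρ_nonneg hIntId.fst).1 hρ₀.symm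
    refine ae_iff.1 ?_
    filter_upwards [hdom, hρ] with x hx hρx
    exact (energyExt_ne_top_iff.1 hx).resolve_left hρx.not_gt
  · left
    rw [← fst_integral hIntId] at hρ₀
    have hmeas : AEMeasurable (energyExt d γ cv) ν := measurable_energyExt.aemeasurable
    refine Measure.eq_dirac_of_ae_eq (ae_eq_integral_id_of_integral_eq_of_strict_support hIntId
      (integrable_toReal_of_lintegral_ne_top hmeas (hjensen ▸ hfinval)) hdom
      (fun x hx hxb => energyExt_toReal_add_lt hγ hcv_pos hρ₀ hx hxb) ?_)
    rw [integral_toReal hmeas (hdom.mono fun x hx => lt_top_iff_ne_top.2 hx), hjensen]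

/-- Sharp form of Jensen's inequality: if equality holds in Jensen's inequality for the convex
energy `e`, which is strictly convex on `{ρ > 0}`, then the probability measure `ν` is either a
Dirac mass at its barycenter or is supported in the degenerate set
`{ρ = 0, m = 0, S ≤ 0}`. -/
theorem sharp_jensen_dirac_or_degenerate (d : ℕ) (hd : 1 ≤ d) (γ : ℝ) (hγ : 1 < γ)
    (cv : ℝ) (hcv : cv = 1 / (γ - 1))
    (ν : Measure (ℝ × EuclideanSpace ℝ (Fin d) × ℝ)) (hprob : IsProbabilityMeasure ν)
    -- `ν` is supported where `e` is finite:
    (hfin : ν {x | energyExt d γ cv x = ⊤} = 0)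
    -- the barycenter exists:
    (hIntId : Integrable (fun x => x) ν)
    -- equality in Jensen's inequality, with finite value:
    (hjensen : ∫⁻ x, energyExt d γ cv x ∂ν = energyExt d γ cv (∫ x, x ∂ν))
    (hfinval : energyExt d γ cv (∫ x, x ∂ν) ≠ ⊤) :
    ν = Measure.dirac (∫ x, x ∂ν) ∨
      ν {x | ¬(x.1 = 0 ∧ x.2.1 = 0 ∧ x.2.2 ≤ 0)} = 0 :=
  sharp_jensen_dirac_or_degenerate_general d γ hγ cv hcv ν hprob hfin hIntId hjensen hfinval
end
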